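/- Let $M$ be an $N\times N$ Manin matrix with entries in an associative algebra $\mathcal{A}$, and let $X$ be a $k\times(N-k)$ matrix with entries in $\mathcal{A}$ for some $0 \le k \le N$. Then $\mathrm{cdet}\, M = \mathrm{cdet}\big(M \begin{pmatrix} 1 & X \\ 0 & 1 \end{pmatrix}\big)$. -/

import Mathlib

/-!
Column `t` of `M * U`, for `U` upper unitriangular with entries in `A`, is column `t` of `M` plus
`∑_{i < t} M_i c_i`. Replace the columns of `M` by those of `M * U` from right to left: the columns
to the left of the one being changed are still those of `M`, so expanding the column-ordered
determinant along it, each extra term is a sum over `σ` of `sgn σ` times the ordered product of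
the first `t + 1` entries times a factor depending only on `σ` at later positions, and the first
`t + 1` columns are those of a Manin matrix with a repeated column. Such a sum vanishes: for
adjacent repeated columns, pair `σ` with `σ * swap p (p + 1)` and use that the entries of one
column commute; in general, the Manin cross relation makes a swap of two adjacent columns change
the sign, which brings the repeated columns together.
-/

def cdet {A : Type*} [Ring A] {n : ℕ} (M : Matrix (Fin n) (Fin n) A) : A :=
  ∑ σ : Equiv.Perm (Fin n), ((Equiv.Perm.sign σ : ℤ) • (List.ofFn fun j => M (σ j) j).prod)

def IsManin {A : Type*} [Ring A] {m n : Type*} (M : Matrix m n A) : Prop :=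
  (∀ i k j, Commute (M i j) (M k j)) ∧
  (∀ i k j l, M i j * M k l - M k l * M i j = M k j * M i l - M i l * M k j)

open Equiv

section OrderedProducts

variable {A : Type*} [Monoid A] {n : ℕ}

def prefixProd (f : Fin n → A) (t : ℕ) : A := ((List.ofFn f).take t).prod

def suffixProd (f : Fin n → A) (t : ℕ) : A := ((List.ofFn f).drop t).prod

lemma prefixProd_succ (f : Fin n → A) (j : Fin n) :
    prefixProd f (j + 1) = prefixProd f j * f j := by
  simp [prefixProd, List.prod_take_succ _ _ (by simp : (j : ℕ) < (List.ofFn f).length)]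

lemma prefixProd_congr {f g : Fin n → A} {t : ℕ} (h : ∀ j : Fin n, (j : ℕ) < t → f j = g j) :
    prefixProd f t = prefixProd g t := by
  unfold prefixProd
  congr 1
  apply List.ext_getElem (by simp)
  intro m h₁ h₂
  simp only [List.getElem_take, List.getElem_ofFn]
  simp only [List.length_take, List.length_ofFn] at h₁
  exact h _ (by simp; omega)

lemma suffixProd_congr {f g : Fin n → A} {t : ℕ} (h : ∀ j : Fin n, t ≤ (j : ℕ) → f j = g j) :
    suffixProd f t = suffixProd g t := by
  unfold suffixProd
  congr 1
  apply List.ext_getElem (by simp)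
  intro m h₁ h₂
  simp only [List.getElem_drop, List.getElem_ofFn]
  exact h _ (by simp)

lemma prod_ofFn_eq_prefixProd_mul_mul_suffixProd (f : Fin n → A) (j : Fin n) :
    (List.ofFn f).prod = prefixProd f j * f j * suffixProd f (j + 1) := by
  rw [← prefixProd_succ, prefixProd, suffixProd, List.prod_take_mul_prod_drop]

lemma exists_prefixProd_eq_mul_mul_of_adjacent (f : Fin n → A) {p q : Fin n}
    (hpq : (q : ℕ) = p + 1) {t : ℕ} (hqt : (q : ℕ) < t) (htn : t ≤ n) :
    ∃ P S : A, ∀ g : Fin n → A, (∀ j, j ≠ p → j ≠ q → g j = f j) →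
      prefixProd g t = P * (g p * g q) * S := by
  induction t, hqt using Nat.le_induction with
  | base =>
    refine ⟨prefixProd f p, 1, fun g hg => ?_⟩
    have hp : prefixProd g p = prefixProd f p :=
      prefixProd_congr fun j hj => hg j (by omega) (by omega)
    rw [prefixProd_succ, hpq, prefixProd_succ, hp, mul_one, mul_assoc]
  | succ t hqt ih =>
    obtain ⟨P, S, hPS⟩ := ih (by omega)
    refine ⟨P, S * f ⟨t, by omega⟩, fun g hg => ?_⟩
    rw [prefixProd_succ g ⟨t, by omega⟩, hPS g hg,
      hg ⟨t, by omega⟩ (Fin.ne_of_val_ne (by simp; omega)) (Fin.ne_of_val_ne (by simp; omega)),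
      mul_assoc _ S]

end OrderedProducts

lemma IsManin.submatrix {A : Type*} [Ring A] {m n m' n' : Type*} {M : Matrix m n A}
    (hM : IsManin M) (f : m' → m) (g : n' → n) : IsManin (M.submatrix f g) :=
  ⟨fun _ _ _ => hM.1 _ _ _, fun _ _ _ _ => hM.2 _ _ _ _⟩

lemma Equiv.Perm.sum_sign_smul_eq_zero_of_mul_swap {α M : Type*} [DecidableEq α] [Fintype α]
    [AddCommGroup M] {F : Perm α → M} {p q : α} (hpq : p ≠ q)
    (hF : ∀ σ, F (σ * swap p q) = F σ) :
    ∑ σ : Perm α, (Perm.sign σ : ℤ) • F σ = 0 := by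
  refine Finset.sum_ninvolution (· * swap p q) (fun σ => ?_) (fun σ _ => ?_)
    (fun _ => Finset.mem_univ _) (mul_swap_mul_self p q)
  · rw [hF, Perm.sign_mul, Perm.sign_swap hpq]
    simp
  · intro h
    have h' : σ q = σ p := by simpa using congrArg (· p) h
    exact hpq (σ.injective h').symm

section PrefixCdet

variable {A : Type*} [Ring A] {n : ℕ}

-- The column-ordered determinant cut off after `t` columns, with `w σ` standing in for the
-- contribution of the remaining positions.
def prefixCdet (K : Matrix (Fin n) (Fin n) A) (t : ℕ) (w : Perm (Fin n) → A) : A :=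
  ∑ σ : Perm (Fin n), (Perm.sign σ : ℤ) • (prefixProd (fun j => K (σ j) j) t * w σ)

variable {K : Matrix (Fin n) (Fin n) A} {t : ℕ} {w : Perm (Fin n) → A} {p q : Fin n}

lemma exists_prefixProd_mul_swap_eq (hpq : (q : ℕ) = p + 1) (hqt : (q : ℕ) < t) (htn : t ≤ n)
    (σ : Perm (Fin n)) :
    ∃ P S : A, ∀ K' : Matrix (Fin n) (Fin n) A, (∀ r j, j ≠ p → j ≠ q → K' r j = K r j) →
      prefixProd (fun j => K' (σ j) j) t = P * (K' (σ p) p * K' (σ q) q) * S ∧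
      prefixProd (fun j => K' ((σ * swap p q) j) j) t = P * (K' (σ q) p * K' (σ p) q) * S := by
  obtain ⟨P, S, hPS⟩ := exists_prefixProd_eq_mul_mul_of_adjacent (fun j => K (σ j) j) hpq hqt htn
  refine ⟨P, S, fun K' hK' => ⟨?_, ?_⟩⟩
  · exact hPS _ fun j hp hq => hK' _ _ hp hq
  · rw [hPS _ fun j hp hq => by simp [swap_apply_of_ne_of_ne hp hq, hK' _ _ hp hq]]
    simp

lemma prefixCdet_eq_zero_of_adjacent (hK : IsManin K) (hpq : (q : ℕ) = p + 1) (hqt : (q : ℕ) < t)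
    (htn : t ≤ n) (hcol : ∀ r, K r p = K r q) (hw : ∀ σ, w (σ * swap p q) = w σ) :
    prefixCdet K t w = 0 := by
  refine Perm.sum_sign_smul_eq_zero_of_mul_swap (p := p) (q := q) (Fin.ne_of_val_ne (by omega))
    fun σ => ?_
  obtain ⟨P, S, hPS⟩ := exists_prefixProd_mul_swap_eq (K := K) hpq hqt htn σ
  obtain ⟨h, hswap⟩ := hPS K fun _ _ _ _ => rfl
  rw [h, hswap, hw, ← hcol, ← hcol, (hK.1 _ _ p).eq]

lemma prefixCdet_add_prefixCdet_swap (hK : IsManin K) (hpq : (q : ℕ) = p + 1) (hqt : (q : ℕ) < t)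
    (htn : t ≤ n) (hw : ∀ σ, w (σ * swap p q) = w σ) :
    prefixCdet K t w + prefixCdet (K.submatrix id (swap p q)) t w = 0 := by
  rw [prefixCdet, prefixCdet, ← Finset.sum_add_distrib]
  simp_rw [← smul_add, ← add_mul]
  refine Perm.sum_sign_smul_eq_zero_of_mul_swap (p := p) (q := q) (Fin.ne_of_val_ne (by omega))
    fun σ => ?_
  obtain ⟨P, S, hPS⟩ := exists_prefixProd_mul_swap_eq (K := K) hpq hqt htn σ
  obtain ⟨h, hswap⟩ := hPS K fun _ _ _ _ => rfl
  obtain ⟨h', hswap'⟩ := hPS (K.submatrix id (swap p q)) fun r j hp hq => by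
    simp [swap_apply_of_ne_of_ne hp hq]
  have hcross : K (σ q) p * K (σ p) q + K (σ q) q * K (σ p) p =
      K (σ p) p * K (σ q) q + K (σ p) q * K (σ q) p :=
    (sub_eq_sub_iff_add_eq_add.mp (hK.2 (σ p) (σ q) p q)).symm
  rw [h, hswap, h', hswap', hw]
  simp only [Matrix.submatrix_apply, id, swap_apply_left, swap_apply_right, ← add_mul, ← mul_add,
    hcross]

theorem prefixCdet_eq_zero_of_col_eq {K : Matrix (Fin n) (Fin n) A} (hK : IsManin K) {t : ℕ}
    (htn : t ≤ n) {w : Perm (Fin n) → A}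
    (hw : ∀ σ (p q : Fin n), (p : ℕ) < t → (q : ℕ) < t → w (σ * swap p q) = w σ)
    {i j : Fin n} (hij : i < j) (hjt : (j : ℕ) < t) (hcol : ∀ r, K r i = K r j) :
    prefixCdet K t w = 0 := by
  obtain ⟨d, hd⟩ : ∃ d, (j : ℕ) = i + 1 + d := ⟨j - (i + 1), by rw [Fin.lt_def] at hij; omega⟩
  clear hij
  induction d generalizing K i with
  | zero => exact prefixCdet_eq_zero_of_adjacent hK hd hjt htn hcol (hw · _ _ (by omega) hjt)
  | succ d ih =>
    let i' : Fin n := ⟨i + 1, by omega⟩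
    have hswap_j : swap i i' j = j :=
      swap_apply_of_ne_of_ne (Fin.ne_of_val_ne (by omega)) (Fin.ne_of_val_ne (by simp [i']; omega))
    have hK' : prefixCdet (K.submatrix id (swap i i')) t w = 0 :=
      ih (hK.submatrix _ _) (i := i') (fun r => by simp [hswap_j, hcol]) (by simp [i']; omega)
    have hsum := prefixCdet_add_prefixCdet_swap (p := i) (q := i') hK rfl (by simp [i']; omega) htn
      (hw · _ _ (by omega) (by simp [i']; omega))
    rwa [hK', add_zero] at hsum

end PrefixCdet

section ColumnOperation

variable {A : Type*} [Ring A] {n : ℕ}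

lemma sum_sign_smul_prefixProd_mul_mul_suffixProd_eq_zero {M N : Matrix (Fin n) (Fin n) A}
    (hM : IsManin M) {t i : Fin n} (hN : ∀ r, ∀ j < t, N r j = M r j) (hit : i < t) (x : A) :
    ∑ σ : Perm (Fin n), (Perm.sign σ : ℤ) • (prefixProd (fun j => N (σ j) j) t *
      (M (σ t) i * x) * suffixProd (fun j => N (σ j) j) (t + 1)) = 0 := by
  let K := M.submatrix id (Function.update id t i)
  have hvanish :
      prefixCdet K (t + 1) (fun σ => x * suffixProd (fun j => N (σ j) j) (t + 1)) = 0 := by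
    refine prefixCdet_eq_zero_of_col_eq (hM.submatrix _ _) t.isLt (fun σ p q hp hq => ?_) hit
      (lt_add_one _) (fun r => by simp [Function.update_of_ne hit.ne])
    congr 1
    exact suffixProd_congr fun j hj => by
      rw [Perm.mul_apply, swap_apply_of_ne_of_ne (Fin.ne_of_val_ne (by omega))
        (Fin.ne_of_val_ne (by omega))]
  rw [← hvanish, prefixCdet]
  refine Finset.sum_congr rfl fun σ _ => ?_
  have hpre : prefixProd (fun j => K (σ j) j) t = prefixProd (fun j => N (σ j) j) t :=
    prefixProd_congr fun j hj => by
      simp [K, Function.update_of_ne (Fin.ne_of_val_ne hj.ne), hN _ j hj]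
  rw [prefixProd_succ, hpre]
  simp [K, mul_assoc]

theorem cdet_updateCol_add_sum_mul {M N : Matrix (Fin n) (Fin n) A} (hM : IsManin M) (t : Fin n)
    (hN : ∀ r, ∀ j < t, N r j = M r j) (c : Fin n → A) (hc : ∀ i, t ≤ i → c i = 0) :
    cdet (N.updateCol t fun r => N r t + ∑ i, M r i * c i) = cdet N := by
  have hterm : ∀ i, ∑ σ : Perm (Fin n), (Perm.sign σ : ℤ) • (prefixProd (fun j => N (σ j) j) t *
      (M (σ t) i * c i) * suffixProd (fun j => N (σ j) j) (t + 1)) = 0 := by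
    intro i
    rcases lt_or_ge i t with hit | hti
    · exact sum_sign_smul_prefixProd_mul_mul_suffixProd_eq_zero hM hN hit (c i)
    · simp [hc i hti]
  have hupd : ∀ σ : Perm (Fin n), (List.ofFn fun j => (N.updateCol t fun r =>
      N r t + ∑ i, M r i * c i) (σ j) j).prod = (List.ofFn fun j => N (σ j) j).prod +
        ∑ i, prefixProd (fun j => N (σ j) j) t * (M (σ t) i * c i) *
          suffixProd (fun j => N (σ j) j) (t + 1) := by
    intro σ
    rw [prod_ofFn_eq_prefixProd_mul_mul_suffixProd _ t,
      prod_ofFn_eq_prefixProd_mul_mul_suffixProd _ t,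
      prefixProd_congr fun j hj => Matrix.updateCol_ne (Fin.ne_of_val_ne hj.ne),
      suffixProd_congr fun j hj => Matrix.updateCol_ne (Fin.ne_of_val_ne (by omega)),
      Matrix.updateCol_self, mul_add, add_mul, Finset.mul_sum, Finset.sum_mul]
  simp only [cdet, hupd, smul_add, Finset.smul_sum, Finset.sum_add_distrib]
  rw [Finset.sum_comm, Finset.sum_eq_zero fun i _ => hterm i, add_zero]

theorem cdet_mul_of_isUpperTriangular {M U : Matrix (Fin n) (Fin n) A} (hM : IsManin M)
    (hU : U.IsUpperTriangular) (hU₁ : ∀ i, U i i = 1) : cdet (M * U) = cdet M := by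
  let N : ℕ → Matrix (Fin n) (Fin n) A := fun s =>
    Matrix.of fun r j => if (j : ℕ) < s then M r j else (M * U) r j
  have hstep (t : Fin n) : cdet (N t) = cdet (N (t + 1)) := by
    have hcol : N t =
        (N (t + 1)).updateCol t fun r => N (t + 1) r t + ∑ i, M r i * (U - 1) i t := by
      ext r j
      rcases eq_or_ne j t with rfl | hjt
      · have hMU : M * U = M + M * (U - 1) := by
          rw [Matrix.mul_sub, Matrix.mul_one, add_sub_cancel]
        simp only [N, Matrix.of_apply, Matrix.updateCol_self, lt_irrefl, if_false, lt_add_one,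
          if_true]
        rw [hMU, Matrix.add_apply, Matrix.mul_apply]
      · have hj : (j : ℕ) < t + 1 ↔ (j : ℕ) < t := by have := Fin.val_ne_of_ne hjt; omega
        rw [Matrix.updateCol_ne hjt]
        simp only [N, Matrix.of_apply, hj]
    rw [hcol]
    refine cdet_updateCol_add_sum_mul hM t (fun r j hj => ?_) _ fun i hi => ?_
    · simp [N, Nat.lt_succ_of_lt (Fin.lt_def.mp hj)]
    · rcases hi.eq_or_lt with rfl | hti
      · simp [hU₁]
      · simp [hU hti, Matrix.one_apply_ne hti.ne']
  have hN : ∀ s ≤ n, cdet (N 0) = cdet (N s) := by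
    intro s hs
    induction s with
    | zero => rfl
    | succ s ih => rw [ih (by omega), hstep ⟨s, hs⟩]
  have hN₀ : N 0 = M * U := by ext; simp [N]
  have hNₙ : N n = M := by ext; simp [N]
  rw [← hN₀, hN n le_rfl, hNₙ]

end ColumnOperation

section BlockUnitriangular

variable {A : Type*} [Zero A] [One A] {k l : ℕ} (X : Matrix (Fin k) (Fin l) A)

lemma isUpperTriangular_fromBlocks_one_zero_one :
    ((Matrix.fromBlocks 1 X 0 1).submatrix finSumFinEquiv.symm
      finSumFinEquiv.symm).IsUpperTriangular := by
  intro i j hji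
  induction i using Fin.addCases with
  | left a => induction j using Fin.addCases with
    | left b => simpa using Matrix.one_apply_ne (by rintro rfl; exact lt_irrefl _ hji)
    | right b => exact absurd (Fin.lt_def.mp hji) (by simp; omega)
  | right a => induction j using Fin.addCases with
    | left b => simp
    | right b => simpa using Matrix.one_apply_ne (by rintro rfl; exact lt_irrefl _ hji)

lemma fromBlocks_one_zero_one_apply_self (i : Fin (k + l)) :
    (Matrix.fromBlocks 1 X 0 1).submatrix finSumFinEquiv.symm finSumFinEquiv.symm i i = 1 := by
  induction i using Fin.addCases <;> simp

end BlockUnitriangular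

/-- Multiplying a Manin matrix on the right by a block upper unitriangular matrix
`(1 X; 0 1)` does not change the column-ordered determinant. -/
theorem stmt5 {A : Type*} [Ring A] (k l : ℕ)
    (M : Matrix (Fin (k + l)) (Fin (k + l)) A) (hM : IsManin M)
    (X : Matrix (Fin k) (Fin l) A) :
    cdet M =
      cdet (M * ((Matrix.fromBlocks 1 X 0 1).submatrix
        finSumFinEquiv.symm finSumFinEquiv.symm)) :=
  (cdet_mul_of_isUpperTriangular hM (isUpperTriangular_fromBlocks_one_zero_one X)
    (fromBlocks_one_zero_one_apply_self X)).symm
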